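/- Let X be a complex Banach space with open unit ball B and let F : B → X be holomorphic. Suppose there exist ε > 0, real numbers θ, a, b such that Re(e^{iθ}⟨F(z), z*⟩) ≤ a‖z‖² + b(1 − ‖z‖²) for all z with 1−ε < ‖z‖ < 1. Then the map G(z) := e^{iθ}F(z) − a·z is an infinitesimal generator on B, i.e., Re⟨G(z), z*⟩ ≤ Re⟨G(0), z*⟩·(1−‖z‖²) for all z ∈ B; consequently Re(e^{iθ}⟨F(z), z*⟩) ≤ a‖z‖² + ‖F(0)‖·(1−‖z‖²) holds for all z ∈ B. -/

import Mathlib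

/-!
Restrict to the complex line through `z`: for a unit vector `u` with supporting functional `u*`,
`φ(w) = u*(G(w u))` satisfies `Re(w̄ φ(w)) ≤ K (1 - |w|²)` near the unit circle, because
`(w u, w̄ u*)` is again a supporting pair. On the disc the function
`ψ(w) = (φ(w) - φ(0)) / w + conj(φ(0)) w` is holomorphic and
`|w|² Re ψ(w) = Re(w̄ φ(w)) - Re(w̄ φ(0)) (1 - |w|²)`, so `Re ψ = O(1 - ρ)` on the circles `|w| = ρ`
as `ρ → 1`. The maximum principle for `Re ψ` gives `Re ψ ≤ 0`, which is the generator inequality.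
The bound by `‖F 0‖` then follows from `Re z*(v) ≤ ‖z‖ ‖v‖`.
-/

open Complex Metric Filter Topology ComplexConjugate

theorem Complex.re_le_of_forall_mem_frontier_re_le {E : Type*} [NormedAddCommGroup E]
    [NormedSpace ℂ E] [Nontrivial E] {f : E → ℂ} {U : Set E} (hU : Bornology.IsBounded U)
    (hf : DiffContOnCl ℂ f U) {C : ℝ} (hC : ∀ z ∈ frontier U, (f z).re ≤ C) {z : E}
    (hz : z ∈ closure U) : (f z).re ≤ C := by
  have hexp := norm_le_of_forall_mem_frontier_norm_le hU
    (differentiable_exp.comp_diffContOnCl hf) (C := Real.exp C)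
    (fun w hw => by simpa only [Function.comp_apply, norm_exp, Real.exp_le_exp] using hC w hw) hz
  simpa only [Function.comp_apply, norm_exp, Real.exp_le_exp] using hexp

theorem Complex.re_nonpos_of_re_le_on_spheres {f : ℂ → ℂ} (hf : DifferentiableOn ℂ f (ball 0 1))
    {g : ℝ → ℝ} (hg : Tendsto g (𝓝[<] 1) (𝓝 0))
    (hbd : ∀ᶠ ρ in 𝓝[<] 1, ∀ w ∈ sphere (0 : ℂ) ρ, (f w).re ≤ g ρ) {w : ℂ}
    (hw : w ∈ ball 0 1) : (f w).re ≤ 0 := by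
  rw [mem_ball_zero_iff] at hw
  refine ge_of_tendsto hg ?_
  filter_upwards [hbd, Ioo_mem_nhdsLT hw] with ρ hρ ⟨hwρ, hρ1⟩
  have hρ0 : ρ ≠ 0 := (lt_of_le_of_lt (norm_nonneg w) hwρ).ne'
  have hcl : closure (ball (0 : ℂ) ρ) ⊆ ball 0 1 := by
    rw [closure_ball 0 hρ0]
    exact closedBall_subset_ball hρ1
  refine re_le_of_forall_mem_frontier_re_le isBounded_ball
    ((hf.mono hcl).diffContOnCl) (fun z hz => hρ z ?_) (subset_closure ?_)
  · rwa [frontier_ball 0 hρ0] at hz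
  · rwa [mem_ball_zero_iff]

theorem Complex.sq_norm_mul_re_dslope_add (h : ℂ → ℂ) {w : ℂ} (hw : w ≠ 0) :
    ‖w‖ ^ 2 * (dslope h 0 w + conj (h 0) * w).re =
      (conj w * h w).re - (conj w * h 0).re * (1 - ‖w‖ ^ 2) := by
  have hsq : ((‖w‖ ^ 2 : ℝ) : ℂ) = conj w * w := by rw [conj_mul']; push_cast; rfl
  have key : ((‖w‖ ^ 2 : ℝ) : ℂ) * (dslope h 0 w + conj (h 0) * w) =
      conj w * h w - conj w * h 0 + ((‖w‖ ^ 2 : ℝ) : ℂ) * conj (conj w * h 0) := by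
    rw [dslope_of_ne _ hw, slope_def_field, sub_zero, hsq]
    simp only [map_mul, conj_conj]
    field_simp
  rw [← re_ofReal_mul, key, add_re, sub_re, re_ofReal_mul, conj_re]
  ring

theorem Complex.re_conj_mul_le_of_annulus {h : ℂ → ℂ} (hh : DifferentiableOn ℂ h (ball 0 1))
    {K ε : ℝ} (hε : 0 < ε)
    (hbd : ∀ w : ℂ, 1 - ε < ‖w‖ → ‖w‖ < 1 → (conj w * h w).re ≤ K * (1 - ‖w‖ ^ 2))
    {w : ℂ} (hw : w ∈ ball 0 1) : (conj w * h w).re ≤ (conj w * h 0).re * (1 - ‖w‖ ^ 2) := by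
  set ψ : ℂ → ℂ := fun v => dslope h 0 v + conj (h 0) * v
  set C := |K| + ‖h 0‖
  have hψ : DifferentiableOn ℂ ψ (ball 0 1) :=
    ((differentiableOn_dslope (ball_mem_nhds 0 one_pos)).mpr hh).add (by fun_prop)
  have hψ_annulus : ∀ v : ℂ, 1 - ε < ‖v‖ → ‖v‖ < 1 → v ≠ 0 →
      (ψ v).re ≤ C * (1 - ‖v‖ ^ 2) / ‖v‖ ^ 2 := by
    intro v hεv hv1 hv0
    rw [le_div_iff₀ (by positivity), mul_comm, sq_norm_mul_re_dslope_add h hv0]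
    have hre : |(conj v * h 0).re| ≤ ‖h 0‖ := by
      refine (abs_re_le_norm _).trans ?_
      rw [norm_mul, norm_conj]
      exact mul_le_of_le_one_left (norm_nonneg _) hv1.le
    have hv : 0 ≤ 1 - ‖v‖ ^ 2 := by nlinarith [norm_nonneg v]
    obtain ⟨hlow, -⟩ := abs_le.mp hre
    nlinarith [hbd v hεv hv1, mul_nonneg (sub_nonneg.mpr (le_abs_self K)) hv,
      mul_nonneg (neg_le_iff_add_nonneg.mp hlow) hv]
  have hψ_nonpos : (ψ w).re ≤ 0 := by
    refine re_nonpos_of_re_le_on_spheres hψ (g := fun ρ => C * (1 - ρ ^ 2) / ρ ^ 2) ?_ ?_ hw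
    · have : ContinuousAt (fun ρ : ℝ => C * (1 - ρ ^ 2) / ρ ^ 2) 1 := by
        fun_prop (disch := norm_num)
      simpa using this.tendsto.mono_left nhdsWithin_le_nhds
    · filter_upwards [Ioo_mem_nhdsLT (max_lt (sub_lt_self 1 hε) one_pos)] with ρ ⟨hρ, hρ1⟩ v hv
      rw [mem_sphere_zero_iff_norm] at hv
      subst hv
      rw [max_lt_iff] at hρ
      exact hψ_annulus v hρ.1 hρ1 (norm_pos_iff.mp hρ.2)
  rcases eq_or_ne w 0 with rfl | hw0
  · simp
  have := mul_nonpos_of_nonneg_of_nonpos (sq_nonneg ‖w‖) hψ_nonpos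
  rw [sq_norm_mul_re_dslope_add h hw0] at this
  linarith

section SupportingFunctional

variable {X : Type*} [NormedAddCommGroup X] [NormedSpace ℂ X]

def IsSupportingFunctional (z : X) (zs : X →L[ℂ] ℂ) : Prop :=
  zs z = (‖z‖ ^ 2 : ℂ) ∧ ‖zs‖ = ‖z‖

namespace IsSupportingFunctional

variable {z : X} {zs : X →L[ℂ] ℂ}

theorem eq_zero_of_eq_zero (hzs : IsSupportingFunctional z zs) (hz : z = 0) : zs = 0 :=
  norm_eq_zero.mp (by rw [hzs.2, hz, norm_zero])

theorem smul (hzs : IsSupportingFunctional z zs) (w : ℂ) :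
    IsSupportingFunctional (w • z) (conj w • zs) := by
  refine ⟨?_, by rw [norm_smul, norm_smul, norm_conj, hzs.2]⟩
  rw [_root_.smul_apply, map_smul, hzs.1, norm_smul, smul_eq_mul, smul_eq_mul,
    ← mul_assoc, conj_mul']
  push_cast
  ring

theorem re_apply_le (hzs : IsSupportingFunctional z zs) (v : X) : (zs v).re ≤ ‖z‖ * ‖v‖ :=
  (re_le_norm _).trans (hzs.2 ▸ zs.le_opNorm v)

theorem re_apply_sub_smul (hzs : IsSupportingFunctional z zs) (v : X) (a : ℝ) :
    (zs (v - (a : ℂ) • z)).re = (zs v).re - a * ‖z‖ ^ 2 := by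
  rw [map_sub, map_smul, hzs.1, sub_re, smul_eq_mul, ← ofReal_pow, re_ofReal_mul, ofReal_re]

end IsSupportingFunctional

theorem re_apply_le_of_annulus {G : X → X} (hG : DifferentiableOn ℂ G (ball 0 1)) {K ε : ℝ}
    (hε : 0 < ε)
    (hbd : ∀ z : X, 1 - ε < ‖z‖ → ‖z‖ < 1 → ∀ zs : X →L[ℂ] ℂ, IsSupportingFunctional z zs →
      (zs (G z)).re ≤ K * (1 - ‖z‖ ^ 2))
    {z : X} (hz : z ∈ ball 0 1) {zs : X →L[ℂ] ℂ} (hzs : IsSupportingFunctional z zs) :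
    (zs (G z)).re ≤ (zs (G 0)).re * (1 - ‖z‖ ^ 2) := by
  rcases eq_or_ne z 0 with hz0 | hz0
  · simp [hzs.eq_zero_of_eq_zero hz0]
  set r := ‖z‖
  have hr : 0 < r := norm_pos_iff.mpr hz0
  set u : X := (r : ℂ)⁻¹ • z
  set us : X →L[ℂ] ℂ := (r : ℂ)⁻¹ • zs
  have hu : IsSupportingFunctional u us := by
    simpa only [map_inv₀, conj_ofReal] using hzs.smul (r : ℂ)⁻¹
  have hnorm : ∀ w : ℂ, ‖w • u‖ = ‖w‖ := fun w => by
    rw [norm_smul, norm_smul, norm_inv, norm_real, Real.norm_of_nonneg hr.le,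
      inv_mul_cancel₀ hr.ne', mul_one]
  have hmaps : Set.MapsTo (· • u) (ball (0 : ℂ) 1) (ball 0 1) := fun w hw => by
    rwa [mem_ball_zero_iff, hnorm, ← mem_ball_zero_iff]
  set φ : ℂ → ℂ := fun w => us (G (w • u))
  have hφ : DifferentiableOn ℂ φ (ball 0 1) :=
    us.differentiable.comp_differentiableOn (hG.comp (by fun_prop) hmaps)
  have hφ_annulus : ∀ w : ℂ, 1 - ε < ‖w‖ → ‖w‖ < 1 → (conj w * φ w).re ≤ K * (1 - ‖w‖ ^ 2) := by
    intro w hεw hw1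
    have := hbd (w • u) (by rwa [hnorm]) (by rwa [hnorm]) _ (hu.smul w)
    rwa [hnorm, _root_.smul_apply, smul_eq_mul] at this
  have hru : (r : ℂ) • u = z := by
    rw [smul_smul, mul_inv_cancel₀ (ofReal_ne_zero.mpr hr.ne'), one_smul]
  have hrus : ∀ v : X, conj (r : ℂ) * us v = zs v := fun v => by
    rw [conj_ofReal, _root_.smul_apply, smul_eq_mul, ← mul_assoc,
      mul_inv_cancel₀ (ofReal_ne_zero.mpr hr.ne'), one_mul]
  have hrball : (r : ℂ) ∈ ball (0 : ℂ) 1 := by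
    rwa [mem_ball_zero_iff, norm_real, Real.norm_of_nonneg hr.le, ← mem_ball_zero_iff]
  have := re_conj_mul_le_of_annulus hφ hε hφ_annulus hrball
  simpa only [φ, hru, zero_smul, hrus, norm_real, Real.norm_of_nonneg hr.le] using this

end SupportingFunctional

theorem stmt7_general {X : Type*} [NormedAddCommGroup X] [NormedSpace ℂ X]
    (F : X → X) (hF : DifferentiableOn ℂ F (ball 0 1))
    (θ a b ε : ℝ) (hε : 0 < ε)
    (hpd : ∀ z : X, 1 - ε < ‖z‖ → ‖z‖ < 1 → ∀ zs : X →L[ℂ] ℂ,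
      zs z = (‖z‖ ^ 2 : ℂ) → ‖zs‖ = ‖z‖ →
      (Complex.exp (θ * Complex.I) * zs (F z)).re ≤ a * ‖z‖ ^ 2 + b * (1 - ‖z‖ ^ 2)) :
    (∀ z ∈ ball (0:X) 1, ∀ zs : X →L[ℂ] ℂ,
      zs z = (‖z‖ ^ 2 : ℂ) → ‖zs‖ = ‖z‖ →
      (zs (Complex.exp (θ * Complex.I) • F z - (a : ℂ) • z)).re ≤
        (zs (Complex.exp (θ * Complex.I) • F 0)).re * (1 - ‖z‖ ^ 2)) ∧
    (∀ z ∈ ball (0:X) 1, ∀ zs : X →L[ℂ] ℂ,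
      zs z = (‖z‖ ^ 2 : ℂ) → ‖zs‖ = ‖z‖ →
      (Complex.exp (θ * Complex.I) * zs (F z)).re ≤ a * ‖z‖ ^ 2 + ‖F 0‖ * (1 - ‖z‖ ^ 2)) := by
  set G : X → X := fun z => exp (θ * I) • F z - (a : ℂ) • z
  have hG : DifferentiableOn ℂ G (ball 0 1) := (hF.const_smul _).sub (by fun_prop)
  have hG_annulus : ∀ z : X, 1 - ε < ‖z‖ → ‖z‖ < 1 → ∀ zs : X →L[ℂ] ℂ,
      IsSupportingFunctional z zs → (zs (G z)).re ≤ b * (1 - ‖z‖ ^ 2) := by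
    intro z hεz hz1 zs hzs
    rw [hzs.re_apply_sub_smul, map_smul, smul_eq_mul]
    linarith [hpd z hεz hz1 zs hzs.1 hzs.2]
  have hgen : ∀ z ∈ ball (0 : X) 1, ∀ zs : X →L[ℂ] ℂ, IsSupportingFunctional z zs →
      (zs (G z)).re ≤ (zs (exp (θ * I) • F 0)).re * (1 - ‖z‖ ^ 2) := fun z hz zs hzs => by
    simpa [G] using re_apply_le_of_annulus hG hε hG_annulus hz hzs
  refine ⟨fun z hz zs hzz hzn => hgen z hz zs ⟨hzz, hzn⟩, fun z hz zs hzz hzn => ?_⟩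
  have hzs : IsSupportingFunctional z zs := ⟨hzz, hzn⟩
  have hz1 : ‖z‖ < 1 := mem_ball_zero_iff.mp hz
  have hgen_z := hgen z hz zs hzs
  rw [hzs.re_apply_sub_smul, map_smul, smul_eq_mul] at hgen_z
  have hF0 : (zs (exp (θ * I) • F 0)).re ≤ ‖F 0‖ := by
    refine (hzs.re_apply_le _).trans ?_
    rw [norm_smul, norm_exp_ofReal_mul_I, one_mul]
    exact mul_le_of_le_one_left (norm_nonneg _) hz1.le
  have hz_sq : 0 ≤ 1 - ‖z‖ ^ 2 := by nlinarith [norm_nonneg z]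
  linarith [mul_le_mul_of_nonneg_right hF0 hz_sq]

theorem stmt7 {X : Type*} [NormedAddCommGroup X] [NormedSpace ℂ X] [CompleteSpace X]
    (F : X → X) (hF : DifferentiableOn ℂ F (ball 0 1))
    (θ a b ε : ℝ) (hε : 0 < ε)
    (hpd : ∀ z : X, 1 - ε < ‖z‖ → ‖z‖ < 1 → ∀ zs : X →L[ℂ] ℂ,
      zs z = (‖z‖ ^ 2 : ℂ) → ‖zs‖ = ‖z‖ →
      (Complex.exp (θ * Complex.I) * zs (F z)).re ≤ a * ‖z‖ ^ 2 + b * (1 - ‖z‖ ^ 2)) :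
    (∀ z ∈ ball (0:X) 1, ∀ zs : X →L[ℂ] ℂ,
      zs z = (‖z‖ ^ 2 : ℂ) → ‖zs‖ = ‖z‖ →
      (zs (Complex.exp (θ * Complex.I) • F z - (a : ℂ) • z)).re ≤
        (zs (Complex.exp (θ * Complex.I) • F 0)).re * (1 - ‖z‖ ^ 2)) ∧
    (∀ z ∈ ball (0:X) 1, ∀ zs : X →L[ℂ] ℂ,
      zs z = (‖z‖ ^ 2 : ℂ) → ‖zs‖ = ‖z‖ →
      (Complex.exp (θ * Complex.I) * zs (F z)).re ≤ a * ‖z‖ ^ 2 + ‖F 0‖ * (1 - ‖z‖ ^ 2)) :=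
  stmt7_general F hF θ a b ε hε hpd
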